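/- arXiv:2104.03686 — 6 statements merged into one kernel-verified Lean document; each statement's English description precedes it below -/
import Mathlib

section
/- Let m ≥ 1 and let d ≥ 1 be an odd integer. If f ∈ ℂ[x_0,…,x_m] is homogeneous of degree d and all of its eigen-minors vanish identically, i.e. x_j·(∂f/∂x_i) = x_i·(∂f/∂x_j) as polynomials for all 0 ≤ i, j ≤ m, then f = 0. (This is the injectivity, for odd d, of the linear map φ : Sym^d ℂ^{m+1} → H^0(Q(d−1)) sending f to the section whose components are the eigen-minors of f.) -/
/-!
If all eigen-minors of `f` vanish, the prime `X₀` divides `X₁ ∂₀f = X₀ ∂₁f` but not `X₁`, so `X₀ ∣ ∂₀f`,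
and then `∂ᵢf = Xᵢ g` for one polynomial `g` of degree `d - 2`. Symmetry of second derivatives,
`∂ⱼ(Xᵢ g) = ∂ᵢ(Xⱼ g)`, shows that the eigen-minors of `g` vanish as well. Descending through the
odd degrees, `g = 0` (in degree one, `∂₀f` is a constant divisible by `X₀`), so all partial
derivatives of `f` vanish and Euler's identity `d • f = ∑ Xᵢ ∂ᵢf` forces `f = 0`.
-/

open MvPolynomial

namespace MvPolynomial

variable {σ R : Type*}

section CommSemiring

variable [CommSemiring R] {p : MvPolynomial σ R} {i : σ} {n : ℕ}

lemma IsHomogeneous.degree_add_one_of_X_mul (h : (X i * p).IsHomogeneous n) {s : σ →₀ ℕ}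
    (hs : coeff s p ≠ 0) : s.degree + 1 = n := by
  by_contra hdeg
  refine hs ?_
  rw [← coeff_X_mul s i]
  exact h.coeff_eq_zero (by rwa [map_add, Finsupp.degree_single, add_comm])

lemma IsHomogeneous.of_X_mul (h : (X i * p).IsHomogeneous (n + 1)) : p.IsHomogeneous n := by
  intro s hs
  have hdeg := h.degree_add_one_of_X_mul hs
  rw [Finsupp.degree_eq_weight_one, ← Pi.one_def] at hdeg
  omega

lemma IsHomogeneous.eq_zero_of_X_mul (h : (X i * p).IsHomogeneous 0) : p = 0 := by
  by_contra hp
  obtain ⟨s, hs⟩ := ne_zero_iff.mp hp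
  exact Nat.succ_ne_zero _ (h.degree_add_one_of_X_mul hs)

end CommSemiring

section CommRing

variable [CommRing R]

theorem pderiv_pderiv_comm (i j : σ) (p : MvPolynomial σ R) :
    pderiv i (pderiv j p) = pderiv j (pderiv i p) := by
  have hcomm : ⁅pderiv (R := R) i, pderiv (R := R) j⁆ = 0 := by
    classical
    exact derivation_ext fun k => by
      simp [Derivation.commutator_apply, pderiv_X, Pi.single_apply, apply_ite]
  simpa [Derivation.commutator_apply, sub_eq_zero] using congr($hcomm p)

def EigenminorsVanish (f : MvPolynomial σ R) : Prop :=
  ∀ i j, X j * pderiv i f = X i * pderiv j f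

lemma eigenminorsVanish_of_forall_pderiv_eq_X_mul {f g : MvPolynomial σ R}
    (hg : ∀ i, pderiv i f = X i * g) : EigenminorsVanish g := by
  intro i j
  obtain rfl | hij := eq_or_ne i j
  · rfl
  have hsymm := pderiv_pderiv_comm j i f
  rw [hg, hg, pderiv_mul, pderiv_mul, pderiv_X_of_ne hij, pderiv_X_of_ne hij.symm] at hsymm
  linear_combination -hsymm

variable [IsDomain R] {f : MvPolynomial σ R}

lemma EigenminorsVanish.exists_pderiv_eq_X_mul [Nontrivial σ] (hf : EigenminorsVanish f) :
    ∃ g, ∀ i, pderiv i f = X i * g := by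
  obtain ⟨i₀, i₁, hne⟩ := exists_pair_ne σ
  obtain ⟨g, hg⟩ : X i₀ ∣ pderiv i₀ f :=
    (X_dvd_mul_iff.mp ⟨_, hf i₀ i₁⟩).resolve_left (by rwa [X_dvd_X])
  refine ⟨g, fun i => mul_left_cancel₀ (X_ne_zero i₀) ?_⟩
  rw [hf i i₀, hg, mul_left_comm]

variable [CharZero R] [Fintype σ] {d : ℕ}

lemma IsHomogeneous.eq_zero_of_forall_pderiv_eq_zero (hf : f.IsHomogeneous d) (hd : d ≠ 0)
    (h : ∀ i, pderiv i f = 0) : f = 0 := by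
  have heuler := hf.sum_X_mul_pderiv
  simp only [h, mul_zero, Finset.sum_const_zero] at heuler
  simpa [hd] using heuler.symm

theorem IsHomogeneous.eq_zero_of_eigenminorsVanish_of_odd [Nontrivial σ]
    (hf : f.IsHomogeneous d) (hodd : Odd d) (hmin : EigenminorsVanish f) : f = 0 := by
  obtain ⟨k, rfl⟩ := hodd
  induction k using Nat.strong_induction_on generalizing f with
  | _ k ih =>
  obtain ⟨g, hg⟩ := hmin.exists_pderiv_eq_X_mul
  obtain ⟨i⟩ : Nonempty σ := inferInstance
  have hXg : (X i * g).IsHomogeneous (2 * k) := by simpa [← hg i] using hf.pderiv (i := i)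
  have hg0 : g = 0 := by
    cases k with
    | zero => exact hXg.eq_zero_of_X_mul
    | succ k =>
      exact ih k k.lt_succ_self (eigenminorsVanish_of_forall_pderiv_eq_X_mul hg)
        (hXg.of_X_mul (n := 2 * k + 1))
  exact hf.eq_zero_of_forall_pderiv_eq_zero (by omega) fun i => by rw [hg i, hg0, mul_zero]

end CommRing

end MvPolynomial

theorem eigenminor_map_injective_odd_general (m d : ℕ) (hm : 1 ≤ m) (hodd : Odd d)
    (f : MvPolynomial (Fin (m + 1)) ℂ) (hf : f.IsHomogeneous d)
    (hmin : ∀ i j : Fin (m + 1), X j * pderiv i f = X i * pderiv j f) :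
    f = 0 :=
  haveI : Nontrivial (Fin (m + 1)) := Fin.nontrivial_iff_two_le.mpr (by omega)
  hf.eq_zero_of_eigenminorsVanish_of_odd hodd hmin

theorem eigenminor_map_injective_odd (m d : ℕ) (hm : 1 ≤ m) (hd : 1 ≤ d) (hodd : Odd d)
    (f : MvPolynomial (Fin (m + 1)) ℂ) (hf : f.IsHomogeneous d)
    (hmin : ∀ i j : Fin (m + 1), X j * pderiv i f = X i * pderiv j f) :
    f = 0 :=
  eigenminor_map_injective_odd_general m d hm hodd f hf hmin
end

section
/- Let m ≥ 1, let a ≥ 1 and e ≥ 0 be integers, and let g := (x_0 + i·x_1)^a · q^e ∈ ℂ[x_0,…,x_m], where i is the imaginary unit. Then x_1·(∂g/∂x_0) − x_0·(∂g/∂x_1) = a·(x_0 + i·x_1)^{a−1}·(x_1 − i·x_0)·q^e, and this polynomial is not identically zero. -/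
/-!
The operator `f ↦ x_j ∂f/∂x_i - x_i ∂f/∂x_j` is a derivation, the infinitesimal rotation in the
`(x_i, x_j)`-plane. It kills `q = ∑ x_k²` and sends the linear form `x_i + c x_j` to
`x_j - c x_i`, so by the Leibniz rule it acts on `(x_0 + i x_1)^a q^e` only through the first
factor. The result is a product of nonzero factors in the domain `ℂ[x_0, …, x_m]`; each linear
factor and `q` are nonzero because they evaluate to `1` at a coordinate vector.
-/

open MvPolynomial

namespace MvPolynomial

variable {σ R : Type*} [CommRing R]

noncomputable def angularDerivation (i j : σ) :
    Derivation R (MvPolynomial σ R) (MvPolynomial σ R) :=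
  (X j : MvPolynomial σ R) • pderiv i - (X i : MvPolynomial σ R) • pderiv j

theorem angularDerivation_apply (i j : σ) (f : MvPolynomial σ R) :
    angularDerivation i j f = X j * pderiv i f - X i * pderiv j f :=
  rfl

theorem angularDerivation_X_left {i j : σ} (hij : i ≠ j) :
    angularDerivation i j (X i : MvPolynomial σ R) = X j := by
  simp [angularDerivation_apply, pderiv_X_of_ne hij]

theorem angularDerivation_X_right {i j : σ} (hij : i ≠ j) :
    angularDerivation i j (X j : MvPolynomial σ R) = -X i := by
  simp [angularDerivation_apply, pderiv_X_of_ne hij.symm]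

theorem angularDerivation_X_add_C_mul_X {i j : σ} (hij : i ≠ j) (c : R) :
    angularDerivation i j (X i + C c * X j : MvPolynomial σ R) = X j - C c * X i := by
  rw [map_add, Derivation.leibniz, angularDerivation_X_left hij, angularDerivation_X_right hij,
    angularDerivation_apply (f := C c)]
  simp only [pderiv_C, smul_eq_mul]
  ring

theorem pderiv_sum_X_sq [Fintype σ] (j : σ) :
    pderiv j (∑ i, X i ^ 2 : MvPolynomial σ R) = 2 * X j := by
  classical
  rw [map_sum, Finset.sum_eq_single j]
  · simp [Derivation.leibniz_pow]
  · intro i _ hij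
    simp [Derivation.leibniz_pow, pderiv_X_of_ne hij]
  · simp

theorem angularDerivation_sum_X_sq [Fintype σ] (i j : σ) :
    angularDerivation i j (∑ k, X k ^ 2 : MvPolynomial σ R) = 0 := by
  rw [angularDerivation_apply, pderiv_sum_X_sq, pderiv_sum_X_sq]
  ring

theorem X_add_C_mul_X_ne_zero [Nontrivial R] {i j : σ} (hij : i ≠ j) (c : R) :
    (X i + C c * X j : MvPolynomial σ R) ≠ 0 := by
  classical
  refine ne_of_apply_ne (eval (Pi.single i 1)) ?_
  simp [hij.symm]

theorem X_sub_C_mul_X_ne_zero [Nontrivial R] {i j : σ} (hij : i ≠ j) (c : R) :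
    (X i - C c * X j : MvPolynomial σ R) ≠ 0 := by
  rw [sub_eq_add_neg, ← neg_mul, ← map_neg]
  exact X_add_C_mul_X_ne_zero hij (-c)

theorem sum_X_sq_ne_zero [Nontrivial R] [Fintype σ] [Nonempty σ] :
    (∑ i, X i ^ 2 : MvPolynomial σ R) ≠ 0 := by
  classical
  obtain ⟨k⟩ := ‹Nonempty σ›
  refine ne_of_apply_ne (eval (Pi.single k 1)) ?_
  simp [Pi.single_apply]

end MvPolynomial

theorem eigenminor_of_power_nonzero (m a e : ℕ) (hm : 1 ≤ m) (ha : 1 ≤ a) :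
    letI q : MvPolynomial (Fin (m + 1)) ℂ := ∑ i : Fin (m + 1), X i ^ 2
    letI g : MvPolynomial (Fin (m + 1)) ℂ :=
      (X 0 + C Complex.I * X 1) ^ a * q ^ e
    X (1 : Fin (m + 1)) * pderiv (0 : Fin (m + 1)) g
        - X (0 : Fin (m + 1)) * pderiv (1 : Fin (m + 1)) g =
      C (a : ℂ) * (X 0 + C Complex.I * X 1) ^ (a - 1)
        * (X 1 - C Complex.I * X 0) * q ^ e ∧
    C (a : ℂ) * (X 0 + C Complex.I * X 1) ^ (a - 1)
        * (X 1 - C Complex.I * X 0) * q ^ e ≠ 0 := by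
  have h01 : (0 : Fin (m + 1)) ≠ 1 := by
    rw [Ne, Fin.ext_iff, Fin.val_zero, Fin.val_one', Nat.one_mod_eq_one.mpr (by omega)]
    exact zero_ne_one
  have hDL := angularDerivation_X_add_C_mul_X h01 Complex.I
  have hDq : angularDerivation 0 1 (∑ i : Fin (m + 1), X i ^ 2 : MvPolynomial _ ℂ) = 0 :=
    angularDerivation_sum_X_sq 0 1
  refine ⟨?_, ?_⟩
  · rw [← angularDerivation_apply, Derivation.leibniz, Derivation.leibniz_pow,
      Derivation.leibniz_pow, hDq, hDL]
    simp only [smul_eq_mul, nsmul_eq_mul, map_natCast]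
    ring
  · have hCa : (C (a : ℂ) : MvPolynomial (Fin (m + 1)) ℂ) ≠ 0 := by
      rw [Ne, C_eq_zero, Nat.cast_eq_zero]
      omega
    exact mul_ne_zero (mul_ne_zero (mul_ne_zero hCa
      (pow_ne_zero _ (X_add_C_mul_X_ne_zero h01 _))) (X_sub_C_mul_X_ne_zero h01.symm _))
      (pow_ne_zero _ sum_X_sq_ne_zero)
end

section
/- Let k ≥ 1, let m_1,…,m_k ≥ 1, and let d_1,…,d_k ≥ 1 be integers with d_i odd for at least one index i. If T is a multihomogeneous polynomial of multidegree (d_1,…,d_k) such that for every group l and all indices 0 ≤ i, j ≤ m_l one has x_{l,j}·(∂T/∂x_{l,i}) = x_{l,i}·(∂T/∂x_{l,j}) as polynomials, then T = 0. (This is the injectivity of the linear map φ : Sym^{d_1}V_1⊗⋯⊗Sym^{d_k}V_k → H^0(𝓔) when some d_i is odd.) -/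
/-!
Fix two variables `a ≠ b`. Comparing coefficients in `X b * ∂ₐ T = X a * ∂_b T` at the monomials
`w · xₐ · x_b` gives `(wₐ + 2) c(w · xₐ²) = (w_b + 2) c(w · x_b²)`, which moves two units of
exponent from `a` to `b` without changing the parity of the `a`-exponent; at monomials `u · x_b`
with `uₐ = 0` it gives `c(u · xₐ) = 0`. By induction on the odd `a`-exponent, every coefficient
of `T` whose `a`-exponent is odd vanishes. If `d_l` is odd, every monomial of `T` has an odd
exponent at some variable of group `l`, and `m_l ≥ 1` supplies a second variable in that group.
-/

open MvPolynomial Finsupp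

theorem Finset.exists_odd_of_odd_sum {ι : Type*} {s : Finset ι} {f : ι → ℕ}
    (h : Odd (∑ i ∈ s, f i)) : ∃ i ∈ s, Odd (f i) := by
  obtain ⟨i, hi⟩ := Finset.card_pos.mp ((Finset.odd_sum_iff_odd_card_odd f).mp h).pos
  exact ⟨i, (Finset.mem_filter.mp hi).1, (Finset.mem_filter.mp hi).2⟩

namespace MvPolynomial

variable {σ R : Type*} [CommSemiring R] {a b : σ} {T : MvPolynomial σ R}

theorem coeff_add_single_eq_zero_of_X_mul_pderiv_eq (hab : a ≠ b)
    (h : X b * pderiv a T = X a * pderiv b T) {u : σ →₀ ℕ} (hu : u a = 0) :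
    coeff (u + single a 1) T = 0 := by
  classical
  have hcoeff := congrArg (coeff (single b 1 + u)) h
  have ha : a ∉ (single b 1 + u).support := by simp [hab.symm, hu]
  rwa [coeff_X_mul, coeff_pderiv, hu, coeff_X_mul', if_neg ha, Nat.cast_zero, zero_add,
    mul_one] at hcoeff

theorem coeff_add_single_two_mul_eq_of_X_mul_pderiv_eq
    (h : X b * pderiv a T = X a * pderiv b T) (w : σ →₀ ℕ) :
    coeff (w + single a 2) T * (w a + 2) = coeff (w + single b 2) T * (w b + 2) := by
  have hcoeff := congrArg (coeff (single b 1 + (w + single a 1))) h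
  rw [coeff_X_mul, show single b 1 + (w + single a 1) = single a 1 + (w + single b 1) by abel,
    coeff_X_mul, coeff_pderiv, coeff_pderiv] at hcoeff
  simpa only [add_assoc, ← single_add, Finsupp.add_apply, single_eq_same, Nat.cast_add,
    Nat.cast_one, one_add_one_eq_two] using hcoeff

theorem coeff_eq_zero_of_odd_of_X_mul_pderiv_eq [NoZeroDivisors R] [CharZero R] (hab : a ≠ b)
    (h : X b * pderiv a T = X a * pderiv b T) {t : σ →₀ ℕ} (ht : Odd (t a)) :
    coeff t T = 0 := by
  suffices hodd : ∀ n : ℕ, ∀ u : σ →₀ ℕ, u a = 0 → coeff (u + single a (2 * n + 1)) T = 0 by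
    obtain ⟨n, hn⟩ := ht
    rw [← erase_add_single a t, hn]
    exact hodd n _ erase_same
  intro n
  induction n with
  | zero => exact fun u hu => coeff_add_single_eq_zero_of_X_mul_pderiv_eq hab h hu
  | succ n ih =>
    intro u hu
    have hslide := coeff_add_single_two_mul_eq_of_X_mul_pderiv_eq h (u + single a (2 * n + 1))
    rw [add_right_comm u (single a (2 * n + 1)) (single b 2), ih _ (by simp [hab.symm, hu]),
      zero_mul] at hslide
    have hne : ((u + single a (2 * n + 1)) a : R) + 2 ≠ 0 := by
      exact_mod_cast (show (u + single a (2 * n + 1)) a + 2 ≠ 0 by omega)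
    rw [show 2 * (n + 1) + 1 = 2 * n + 1 + 2 by ring, single_add, ← add_assoc]
    exact (mul_eq_zero.mp hslide).resolve_right hne

end MvPolynomial

theorem multi_eigenminor_map_injective_some_odd_general (k : ℕ)
    (m d : Fin k → ℕ) (hm : ∀ l, 1 ≤ m l)
    (hodd : ∃ i, Odd (d i))
    (T : MvPolynomial (Σ l : Fin k, Fin (m l + 1)) ℂ)
    (hT : ∀ s ∈ T.support, ∀ l : Fin k, (∑ i : Fin (m l + 1), s ⟨l, i⟩) = d l)
    (hmin : ∀ (l : Fin k) (i j : Fin (m l + 1)),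
      X (⟨l, j⟩ : Σ l : Fin k, Fin (m l + 1)) * pderiv (⟨l, i⟩ : Σ l : Fin k, Fin (m l + 1)) T =
      X (⟨l, i⟩ : Σ l : Fin k, Fin (m l + 1)) * pderiv (⟨l, j⟩ : Σ l : Fin k, Fin (m l + 1)) T) :
    T = 0 := by
  obtain ⟨l, hl⟩ := hodd
  have : Nontrivial (Fin (m l + 1)) := Fin.nontrivial_iff_two_le.mpr (by have := hm l; omega)
  refine eq_zero_iff.mpr fun s => by_contra fun hs => ?_
  rw [← hT s (MvPolynomial.mem_support_iff.mpr hs) l] at hl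
  obtain ⟨i, -, hi⟩ := Finset.exists_odd_of_odd_sum hl
  obtain ⟨j, hji⟩ := exists_ne i
  have hij : (⟨l, i⟩ : Σ l : Fin k, Fin (m l + 1)) ≠ ⟨l, j⟩ := sigma_mk_injective.ne hji.symm
  exact hs (coeff_eq_zero_of_odd_of_X_mul_pderiv_eq hij (hmin l i j) hi)

theorem multi_eigenminor_map_injective_some_odd (k : ℕ) (hk : 1 ≤ k)
    (m d : Fin k → ℕ) (hm : ∀ l, 1 ≤ m l) (hd : ∀ l, 1 ≤ d l)
    (hodd : ∃ i, Odd (d i))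
    (T : MvPolynomial (Σ l : Fin k, Fin (m l + 1)) ℂ)
    (hT : ∀ s ∈ T.support, ∀ l : Fin k, (∑ i : Fin (m l + 1), s ⟨l, i⟩) = d l)
    (hmin : ∀ (l : Fin k) (i j : Fin (m l + 1)),
      X (⟨l, j⟩ : Σ l : Fin k, Fin (m l + 1)) * pderiv (⟨l, i⟩ : Σ l : Fin k, Fin (m l + 1)) T =
      X (⟨l, i⟩ : Σ l : Fin k, Fin (m l + 1)) * pderiv (⟨l, j⟩ : Σ l : Fin k, Fin (m l + 1)) T) :
    T = 0 :=
  multi_eigenminor_map_injective_some_odd_general k m d hm hodd T hT hmin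
end

section
/- Let k ≥ 1, let m_1,…,m_k ≥ 1, and suppose every d_l = 2e_l is even and positive. A multihomogeneous polynomial T of multidegree (d_1,…,d_k) satisfies x_{l,j}·(∂T/∂x_{l,i}) = x_{l,i}·(∂T/∂x_{l,j}) as polynomials for every group l and all indices i, j if and only if T = c·q_1^{e_1}·q_2^{e_2}⋯q_k^{e_k} for some scalar c ∈ ℂ. Hence the kernel of the linear map T ↦ (M^l_{ij}(T)) is the one-dimensional span of q_1^{d_1/2}⊗⋯⊗q_k^{d_k/2}. -/
/-!
If all eigen-minors of `T` vanish, then in each group `l` the prime `x_{l,i}` divides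
`x_{l,j} · ∂T/∂x_{l,i}` for some `j ≠ i`, hence divides `∂T/∂x_{l,i}`, and comparing minors shows
that all the quotients `∂T/∂x_{l,i} / x_{l,i}` are one and the same `S`. Euler's identity in the
`l`-th group then reads `2 e_l · T = q_l · S`. The quotient `T / q_l` again has vanishing minors
and multidegree lowered by two in group `l`, so induction on `∑ e_l` ends at a constant.
Conversely, the polynomials with vanishing eigen-minors form a subalgebra containing every `q_l`.
-/

open MvPolynomial

namespace MvPolynomial

variable {σ M R : Type*} [CommSemiring R] [AddCancelCommMonoid M] {w : σ → M}

attribute [local instance] weightedGradedAlgebra in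
theorem IsWeightedHomogeneous.weightedHomogeneousComponent_mul_add {q : MvPolynomial σ R} {a : M}
    (hq : q.IsWeightedHomogeneous w a) (S : MvPolynomial σ R) (j : M) :
    weightedHomogeneousComponent w (a + j) (q * S) = q * weightedHomogeneousComponent w j S := by
  classical
  have := DirectSum.coe_decompose_mul_add_of_left_mem (weightedHomogeneousSubmodule R w)
    (j := j) (b := S) hq
  simp only [← weightedDecomposition.decompose'_apply] at this ⊢
  exact this

theorem IsWeightedHomogeneous.of_mul_left [NoZeroDivisors R] {q S : MvPolynomial σ R} {a j : M}
    (hq₀ : q ≠ 0) (hq : q.IsWeightedHomogeneous w a)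
    (hqS : (q * S).IsWeightedHomogeneous w (a + j)) : S.IsWeightedHomogeneous w j := by
  classical
  intro d hd
  by_contra hdj
  have hcomp : weightedHomogeneousComponent w (Finsupp.weight w d) S = 0 := by
    have := hqS.weightedHomogeneousComponent_ne (a + Finsupp.weight w d) (by simpa using hdj)
    rw [hq.weightedHomogeneousComponent_mul_add] at this
    exact (mul_eq_zero.1 this).resolve_left hq₀
  apply hd
  simpa [coeff_weightedHomogeneousComponent] using congr_arg (coeff d) hcomp

end MvPolynomial

section Eigenminors

variable {ι : Type*} {κ : ι → Type*} {R : Type*}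

section CommRing

variable [CommRing R]

def eigenminorKernel : Subalgebra R (MvPolynomial (Σ l, κ l) R) where
  carrier := {T | ∀ l i j, X ⟨l, j⟩ * pderiv ⟨l, i⟩ T = X ⟨l, i⟩ * pderiv ⟨l, j⟩ T}
  mul_mem' {A B} hA hB l i j := by
    simp only [Derivation.leibniz, smul_eq_mul]
    linear_combination B * hA l i j + A * hB l i j
  add_mem' hA hB l i j := by
    simp only [map_add]
    linear_combination hA l i j + hB l i j
  algebraMap_mem' c l i j := by simp [algebraMap_eq]

theorem mem_eigenminorKernel {T : MvPolynomial (Σ l, κ l) R} :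
    T ∈ eigenminorKernel ↔ ∀ l i j, X ⟨l, j⟩ * pderiv ⟨l, i⟩ T = X ⟨l, i⟩ * pderiv ⟨l, j⟩ T :=
  Iff.rfl

variable [IsDomain R]

theorem mem_eigenminorKernel_of_mul_mem {A B : MvPolynomial (Σ l, κ l) R}
    (hA : A ∈ eigenminorKernel) (hA₀ : A ≠ 0) (hAB : A * B ∈ eigenminorKernel) :
    B ∈ eigenminorKernel := by
  intro l i j
  have h := hAB l i j
  simp only [Derivation.leibniz, smul_eq_mul] at h
  apply mul_left_cancel₀ hA₀
  linear_combination h - B * hA l i j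

theorem exists_pderiv_eq_X_mul {l : ι} [Nontrivial (κ l)] {T : MvPolynomial (Σ l, κ l) R}
    (hT : T ∈ eigenminorKernel) : ∃ S, ∀ i, pderiv ⟨l, i⟩ T = X ⟨l, i⟩ * S := by
  have hdvd (i : κ l) : X ⟨l, i⟩ ∣ pderiv ⟨l, i⟩ T := by
    obtain ⟨j, hji⟩ := exists_ne i
    refine (X_prime.dvd_or_dvd ⟨_, hT l i j⟩).resolve_left ?_
    simpa using hji.symm
  choose S hS using hdvd
  obtain ⟨i₀⟩ : Nonempty (κ l) := inferInstance
  refine ⟨S i₀, fun i => ?_⟩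
  have h := hT l i i₀
  rw [hS i, hS i₀] at h
  rw [hS i, mul_left_cancel₀ (mul_ne_zero (X_ne_zero _) (X_ne_zero _)) (by linear_combination h :
    X ⟨l, i₀⟩ * X ⟨l, i⟩ * S i = X ⟨l, i₀⟩ * X ⟨l, i⟩ * S i₀)]

end CommRing

variable [∀ l, Fintype (κ l)]

noncomputable def quadric [CommSemiring R] (l : ι) : MvPolynomial (Σ l, κ l) R :=
  ∑ i, X ⟨l, i⟩ ^ 2

theorem quadric_ne_zero [CommSemiring R] [Nontrivial R] (l : ι) [Nonempty (κ l)] :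
    (quadric l : MvPolynomial (Σ l, κ l) R) ≠ 0 := by
  classical
  obtain ⟨i⟩ : Nonempty (κ l) := inferInstance
  intro h
  simpa [quadric, coeff_sum, coeff_X_pow, Finsupp.single_left_inj] using
    congr_arg (coeff (Finsupp.single ⟨l, i⟩ 2)) h

variable [DecidableEq ι]

theorem pderiv_quadric [CommSemiring R] (l l' : ι) (i : κ l') :
    pderiv ⟨l', i⟩ (quadric l : MvPolynomial (Σ l, κ l) R) =
      if l' = l then 2 * X ⟨l', i⟩ else 0 := by
  classical
  simp only [quadric, map_sum, Derivation.leibniz_pow, pderiv_X, Pi.single_apply]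
  split_ifs with hl
  · subst hl
    simp
  · simp [Ne.symm hl]

theorem quadric_mem_eigenminorKernel [CommRing R] (l : ι) :
    (quadric l : MvPolynomial (Σ l, κ l) R) ∈ eigenminorKernel := by
  intro l' i j
  simp only [pderiv_quadric]
  split_ifs <;> ring

def groupWeight (l : ι) (v : Σ l, κ l) : ℕ := if v.1 = l then 1 else 0

def IsMultihomogeneous [CommSemiring R] (T : MvPolynomial (Σ l, κ l) R) (n : ι → ℕ) : Prop :=
  ∀ l, T.IsWeightedHomogeneous (groupWeight l) (n l)

theorem isMultihomogeneous_quadric [CommSemiring R] (l : ι) :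
    IsMultihomogeneous (quadric l : MvPolynomial (Σ l, κ l) R) (Pi.single l 2) := by
  intro l'
  refine IsWeightedHomogeneous.sum _ _ _ fun i _ => ?_
  convert (isWeightedHomogeneous_X R (groupWeight l') (⟨l, i⟩ : Σ l, κ l)).pow 2 using 1
  simp [groupWeight, Pi.single_apply, eq_comm]

variable [Fintype ι]

theorem weight_groupWeight (l : ι) (s : (Σ l, κ l) →₀ ℕ) :
    Finsupp.weight (groupWeight l) s = ∑ i, s ⟨l, i⟩ := by
  rw [Finsupp.weight_apply, Finsupp.sum_fintype _ _ (by simp), Fintype.sum_sigma,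
    Finset.sum_eq_single l]
  · simp [groupWeight]
  · intro l' _ hl'
    simp [groupWeight, hl']
  · simp

theorem isMultihomogeneous_iff [CommSemiring R] {T : MvPolynomial (Σ l, κ l) R} {n : ι → ℕ} :
    IsMultihomogeneous T n ↔ ∀ s ∈ T.support, ∀ l, ∑ i, s ⟨l, i⟩ = n l := by
  simp only [IsMultihomogeneous, IsWeightedHomogeneous, weight_groupWeight,
    MvPolynomial.mem_support_iff]
  exact ⟨fun h s hs l => h l hs, fun h l s hs => h s hs l⟩

theorem IsMultihomogeneous.eq_C_of_zero [CommSemiring R] {T : MvPolynomial (Σ l, κ l) R}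
    (hT : IsMultihomogeneous T 0) : T = C (coeff 0 T) := by
  rw [← totalDegree_eq_zero_iff_eq_C, totalDegree_eq_zero_iff]
  rintro s hs ⟨l, i⟩
  exact Finset.sum_eq_zero_iff.1 (isMultihomogeneous_iff.1 hT s hs l) i (Finset.mem_univ i)

theorem MvPolynomial.IsWeightedHomogeneous.sum_X_mul_pderiv_groupWeight [CommSemiring R]
    {l : ι} {n : ℕ} {T : MvPolynomial (Σ l, κ l) R}
    (hT : T.IsWeightedHomogeneous (groupWeight l) n) :
    ∑ i, X ⟨l, i⟩ * pderiv ⟨l, i⟩ T = n • T := by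
  rw [← hT.sum_weight_X_mul_pderiv, Fintype.sum_sigma, Finset.sum_eq_single l]
  · simp [groupWeight]
  · intro l' _ hl'
    simp [groupWeight, hl']
  · simp

section Field

variable {K : Type*} [Field K] [CharZero K]

theorem exists_eq_quadric_mul {l : ι} [Nontrivial (κ l)] {n : ℕ} (hn : n ≠ 0)
    {T : MvPolynomial (Σ l, κ l) K} (hT : T ∈ eigenminorKernel)
    (hdeg : T.IsWeightedHomogeneous (groupWeight l) n) :
    ∃ S : MvPolynomial (Σ l, κ l) K, T = quadric l * S := by
  obtain ⟨S, hS⟩ := exists_pderiv_eq_X_mul (l := l) hT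
  have euler : quadric l * S = C (n : K) * T := by
    rw [map_natCast, ← nsmul_eq_mul, ← hdeg.sum_X_mul_pderiv_groupWeight, quadric,
      Finset.sum_mul]
    exact Finset.sum_congr rfl fun i _ => by rw [hS i]; ring
  refine ⟨C (n : K)⁻¹ * S, ?_⟩
  rw [mul_left_comm, euler, ← mul_assoc, ← C_mul, inv_mul_cancel₀ (by exact_mod_cast hn), C_1,
    one_mul]

theorem exists_eq_quadric_mul_of_isMultihomogeneous {l : ι} [Nontrivial (κ l)]
    {n : ι → ℕ} {T : MvPolynomial (Σ l, κ l) K} (hT : T ∈ eigenminorKernel)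
    (hdeg : IsMultihomogeneous T (n + Pi.single l 2)) :
    ∃ S : MvPolynomial (Σ l, κ l) K,
      S ∈ eigenminorKernel ∧ IsMultihomogeneous S n ∧ T = quadric l * S := by
  obtain ⟨S, rfl⟩ := exists_eq_quadric_mul (by simp) hT (hdeg l)
  refine ⟨S, mem_eigenminorKernel_of_mul_mem (quadric_mem_eigenminorKernel l)
    (quadric_ne_zero l) hT, fun l' => ?_, rfl⟩
  refine (isMultihomogeneous_quadric l l').of_mul_left (quadric_ne_zero l) ?_
  simpa only [Pi.add_apply, add_comm] using hdeg l'

theorem eq_C_mul_prod_quadric_pow_of_mem_eigenminorKernel [∀ l, Nontrivial (κ l)]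
    {e : ι → ℕ} {T : MvPolynomial (Σ l, κ l) K} (hdeg : IsMultihomogeneous T (2 • e))
    (hT : T ∈ eigenminorKernel) : ∃ c, T = C c * ∏ l, quadric l ^ e l := by
  induction h : ∑ l, e l generalizing e T with
  | zero =>
    obtain rfl : e = 0 := funext fun l => Finset.sum_eq_zero_iff.1 h l (Finset.mem_univ l)
    have hdeg₀ : IsMultihomogeneous T 0 := by simpa using hdeg
    exact ⟨coeff 0 T, by simpa using hdeg₀.eq_C_of_zero⟩
  | succ N ih =>
    obtain ⟨l, hl⟩ : ∃ l, e l ≠ 0 := by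
      by_contra! he
      simp [he] at h
    have hle : Pi.single l 1 ≤ e := fun l' => by
      rcases eq_or_ne l' l with rfl | hl'
      · simpa [Nat.one_le_iff_ne_zero] using hl
      · simp [hl']
    obtain ⟨e', rfl⟩ : ∃ e' : ι → ℕ, e = e' + Pi.single l 1 :=
      ⟨e - Pi.single l 1, (tsub_add_cancel_of_le hle).symm⟩
    have hdeg' : 2 • (e' + Pi.single l 1) = 2 • e' + Pi.single l 2 := by
      ext l'
      rcases eq_or_ne l' l with rfl | hl' <;> simp [*, mul_add]
    obtain ⟨S, hS, hSdeg, rfl⟩ :=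
      exists_eq_quadric_mul_of_isMultihomogeneous hT (hdeg' ▸ hdeg)
    obtain ⟨c, rfl⟩ := ih hSdeg hS (by simpa [Finset.sum_add_distrib] using h)
    refine ⟨c, ?_⟩
    simp only [Pi.add_apply, pow_add, Finset.prod_mul_distrib, Pi.single_apply, pow_ite, pow_one,
      pow_zero, Fintype.prod_ite_eq']
    ring

theorem mem_eigenminorKernel_iff_exists_eq_C_mul_prod_quadric_pow [∀ l, Nontrivial (κ l)]
    {e : ι → ℕ} {T : MvPolynomial (Σ l, κ l) K} (hdeg : IsMultihomogeneous T (2 • e)) :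
    T ∈ eigenminorKernel ↔ ∃ c, T = C c * ∏ l, quadric l ^ e l := by
  refine ⟨eq_C_mul_prod_quadric_pow_of_mem_eigenminorKernel hdeg, ?_⟩
  rintro ⟨c, rfl⟩
  exact mul_mem (Subalgebra.algebraMap_mem _ c)
    (prod_mem fun l _ => pow_mem (quadric_mem_eigenminorKernel l) _)

end Field

end Eigenminors

theorem multi_eigenminor_kernel_all_even_general (k : ℕ)
    (m e : Fin k → ℕ) (hm : ∀ l, 1 ≤ m l)
    (T : MvPolynomial (Σ l : Fin k, Fin (m l + 1)) ℂ)
    (hT : ∀ s ∈ T.support, ∀ l : Fin k, (∑ i : Fin (m l + 1), s ⟨l, i⟩) = 2 * e l) :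
    (∀ (l : Fin k) (i j : Fin (m l + 1)),
        X (⟨l, j⟩ : Σ l : Fin k, Fin (m l + 1)) *
            pderiv (⟨l, i⟩ : Σ l : Fin k, Fin (m l + 1)) T =
          X (⟨l, i⟩ : Σ l : Fin k, Fin (m l + 1)) *
            pderiv (⟨l, j⟩ : Σ l : Fin k, Fin (m l + 1)) T) ↔
      ∃ c : ℂ, T = C c * ∏ l : Fin k,
        (∑ i : Fin (m l + 1), X (⟨l, i⟩ : Σ l : Fin k, Fin (m l + 1)) ^ 2) ^ e l := by
  have (l : Fin k) : Nontrivial (Fin (m l + 1)) :=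
    Fin.nontrivial_iff_two_le.2 (Nat.succ_le_succ (hm l))
  rw [← mem_eigenminorKernel]
  exact mem_eigenminorKernel_iff_exists_eq_C_mul_prod_quadric_pow
    (isMultihomogeneous_iff.2 (by simpa using hT))

theorem multi_eigenminor_kernel_all_even (k : ℕ) (hk : 1 ≤ k)
    (m e : Fin k → ℕ) (hm : ∀ l, 1 ≤ m l) (he : ∀ l, 1 ≤ e l)
    (T : MvPolynomial (Σ l : Fin k, Fin (m l + 1)) ℂ)
    (hT : ∀ s ∈ T.support, ∀ l : Fin k, (∑ i : Fin (m l + 1), s ⟨l, i⟩) = 2 * e l) :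
    (∀ (l : Fin k) (i j : Fin (m l + 1)),
        X (⟨l, j⟩ : Σ l : Fin k, Fin (m l + 1)) *
            pderiv (⟨l, i⟩ : Σ l : Fin k, Fin (m l + 1)) T =
          X (⟨l, i⟩ : Σ l : Fin k, Fin (m l + 1)) *
            pderiv (⟨l, j⟩ : Σ l : Fin k, Fin (m l + 1)) T) ↔
      ∃ c : ℂ, T = C c * ∏ l : Fin k,
        (∑ i : Fin (m l + 1), X (⟨l, i⟩ : Σ l : Fin k, Fin (m l + 1)) ^ 2) ^ e l :=
  multi_eigenminor_kernel_all_even_general k m e hm T hT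
end

section
/- (Arithmetic form of Lemma 4.5.) Let k ≥ 2, and let d_1,…,d_k ≥ 1 and m_1,…,m_k ≥ 1 be integers such that m_l ≤ Σ_{i≠l} m_i for every l with d_l = 1, and such that if k = 2 then (d_1,d_2) ≠ (1,1). Let r ≥ 2 be an integer, let j ∈ {1,…,k}, and let r_1,…,r_k and q_1,…,q_k be nonnegative integers with Σ_{l=1}^k r_l = r, Σ_{l=1}^k q_l ≤ r − 1, and r_l ≤ m_l for all l. For l ≠ j set t_l := 2r_l − d_l(r−1) ∈ ℤ, and set t_j := r_j − d_j(r−1) − 2 ∈ ℤ. Then it is impossible that both of the following hold simultaneously: (a) for every l ≠ j, at least one of: (q_l = 0 and t_l > r_l), (q_l = r_l and t_l = 0), (q_l = m_l and t_l < r_l − m_l); and (b) at least one of: (q_j = 0 and t_j ≥ 0), (q_j = r_j − 1 and t_j = −r_j and 1 ≤ r_j ≤ m_j), (q_j = r_j and t_j = −r_j − 1 and r_j ≤ m_j − 1), (q_j = m_j − 1 and t_j = −m_j − 1 and r_j ≤ m_j − 1), (q_j = m_j and t_j ≤ −m_j − 2). -/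
/-!
Write `e_l = d_l (r - 1)`, so that `e_l = r - 1` when `d_l = 1` and `e_l ≥ 2 (r - 1)` otherwise.

If some `l ≠ j` satisfies (a) in degree `q_l = 0`, then `e_l < r_l ≤ r` forces `r_l = r` and
`d_l = 1`, so every other `r_i` vanishes and (a) puts the remaining `q_i` in top degree `m_i`.
Condition (b) then either makes `∑ q` at least `m_l ≥ r` by the triangular inequality at `l`, or
leaves room for only two factors, both with `d = 1`.

Otherwise `q_l ≥ r_l` for every `l ≠ j`, and `∑ q < ∑ r` leaves only the case `q_j = r_j - 1` of
(b), with `q_l = r_l` for all `l ≠ j`. Then `d_j = 1` and `2 r_j = r + 1`, so the other `r_l` add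
up to less than `r_j ≤ m_j`. The triangular inequality at `j` then yields an `l ≠ j` with
`2 r_l = e_l ≥ r - 1`, which exhausts the remaining sum, and again `k = 2` with `d ≡ 1`.
-/

open Finset

/-- Bott's criterion for `H^q(ℙ^m, Ω^r(t)) ≠ 0`. -/
def BottCriterionOmega (m r q : ℕ) (t : ℤ) : Prop :=
  (q = 0 ∧ (r : ℤ) < t) ∨ (q = r ∧ t = 0) ∨ (q = m ∧ t < (r : ℤ) - m)

/-- Bott's criterion for `H^q(ℙ^m, ⋀^{m-r} Q ⊗ Q(t)) ≠ 0`, `Q` the quotient bundle. -/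
def BottCriterionQuotient (m r q : ℕ) (t : ℤ) : Prop :=
  (q = 0 ∧ 0 ≤ t) ∨ ((q : ℤ) = r - 1 ∧ t = -r ∧ 1 ≤ r ∧ r ≤ m) ∨
    (q = r ∧ t = -r - 1 ∧ (r : ℤ) ≤ m - 1) ∨ ((q : ℤ) = m - 1 ∧ t = -m - 1 ∧ (r : ℤ) ≤ m - 1) ∨
    (q = m ∧ t ≤ -m - 2)

theorem Fin.eq_two_of_forall_eq_or_eq {k : ℕ} {a b : Fin k} (hab : a ≠ b)
    (h : ∀ i, i = a ∨ i = b) : k = 2 := by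
  have huniv : (univ : Finset (Fin k)) = {a, b} := by
    ext i
    simpa using h i
  simpa [huniv, card_pair hab] using (card_fin k).symm

namespace BottCriterionOmega

variable {m r q : ℕ} {e : ℤ}

theorem le_of_le_of_le (h : BottCriterionOmega m r q (2 * r - e)) (hrm : r ≤ m) (hre : r ≤ e) :
    r ≤ q := by
  unfold BottCriterionOmega at h
  omega

theorem two_mul_eq_or_eq (h : BottCriterionOmega m r q (2 * r - e)) (hq : q = r) (hre : r ≤ e) :
    2 * r = e ∨ m = r := by
  unfold BottCriterionOmega at h
  omega

theorem eq_of_eq_zero (h : BottCriterionOmega m r q (2 * r - e)) (hr : r = 0) (he : 0 < e) :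
    q = m := by
  unfold BottCriterionOmega at h
  omega

end BottCriterionOmega

namespace BottCriterionQuotient

variable {m r q : ℕ} {e : ℤ}

theorem le_or_eq (h : BottCriterionQuotient m r q (r - e - 2)) (hrm : r ≤ m) (hre : r < e + 2) :
    r ≤ q ∨ (q + 1 = r ∧ 2 * r = e + 2) := by
  unfold BottCriterionQuotient at h
  omega

theorem of_eq_zero (h : BottCriterionQuotient m r q (r - e - 2)) (hr : r = 0) (he : 0 < e) :
    (q + 1 = m ∧ m = e + 1) ∨ (q = m ∧ m ≤ e) := by
  unfold BottCriterionQuotient at h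
  omega

end BottCriterionQuotient

section

variable {k r : ℕ} {m rr q : Fin k → ℕ} {e : Fin k → ℤ}

theorem false_of_two_mul_eq_add_two (hk : 2 ≤ k) (hm : ∀ l, 1 ≤ m l) (hr : 2 ≤ r)
    (he : ∀ l, e l = r - 1 ∨ 2 * ((r : ℤ) - 1) ≤ e l)
    (htri : ∀ l, e l = r - 1 → m l ≤ ∑ i ∈ univ.erase l, m i)
    (hk2 : k = 2 → ¬ ∀ l, e l = r - 1) (hrr : ∑ l, rr l = r) {j : Fin k} (hrm : rr j ≤ m j)
    (hj : 2 * (rr j : ℤ) = e j + 2) (hother : ∀ l, l ≠ j → 2 * (rr l : ℤ) = e l ∨ m l = rr l) :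
    False := by
  have hpos : ∀ l, l ≠ j → 1 ≤ rr l := fun l hl => by
    have := hm l; rcases he l with _ | _ <;> rcases hother l hl with _ | _ <;> omega
  have hsplit := sum_erase_add univ rr (mem_univ j)
  have hle_sum : ∀ l, l ≠ j → rr l ≤ ∑ i ∈ univ.erase j, rr i := fun l hl =>
    single_le_sum_of_canonicallyOrdered (mem_erase.2 ⟨hl, mem_univ l⟩)
  have : Nontrivial (Fin k) := Fin.nontrivial_iff_two_le.2 hk
  obtain ⟨l, hl⟩ := exists_ne j
  have hej : e j = r - 1 := by
    have := hpos l hl; have := hle_sum l hl; rcases he j with _ | _ <;> omega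
  obtain ⟨l₁, hl₁j, hl₁⟩ : ∃ l, l ≠ j ∧ 2 * (rr l : ℤ) = e l := by
    by_contra! hall
    have hsum : ∑ i ∈ univ.erase j, m i = ∑ i ∈ univ.erase j, rr i :=
      sum_congr rfl fun i hi =>
        (hother i (ne_of_mem_erase hi)).resolve_left (hall i (ne_of_mem_erase hi))
    have := htri j hej
    omega
  have hcover : ∀ i, i = j ∨ i = l₁ := by
    intro i
    by_contra! hi
    have := add_le_sum (fun _ _ => Nat.zero_le _) (mem_erase.2 ⟨hi.1, mem_univ i⟩)
      (mem_erase.2 ⟨hl₁j, mem_univ l₁⟩) hi.2 (f := rr)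
    have := hpos i hi.1
    rcases he l₁ with _ | _ <;> omega
  have hel₁ : e l₁ = r - 1 := by have := hle_sum l₁ hl₁j; rcases he l₁ with _ | _ <;> omega
  exact hk2 (Fin.eq_two_of_forall_eq_or_eq hl₁j.symm hcover) fun i =>
    (hcover i).elim (· ▸ hej) (· ▸ hel₁)

theorem not_bottCriteria_of_lt (hm : ∀ l, 1 ≤ m l) (hr : 2 ≤ r)
    (he : ∀ l, e l = r - 1 ∨ 2 * ((r : ℤ) - 1) ≤ e l)
    (htri : ∀ l, e l = r - 1 → m l ≤ ∑ i ∈ univ.erase l, m i)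
    (hk2 : k = 2 → ¬ ∀ l, e l = r - 1) (hrr : ∑ l, rr l = r) (hq : ∑ l, q l ≤ r - 1)
    (hrm : ∀ l, rr l ≤ m l) {j l₀ : Fin k} (hl₀j : l₀ ≠ j) (hl₀ : e l₀ < rr l₀) :
    ¬ ((∀ l, l ≠ j → BottCriterionOmega (m l) (rr l) (q l) (2 * rr l - e l)) ∧
      BottCriterionQuotient (m j) (rr j) (q j) (rr j - e j - 2)) := by
  rintro ⟨ha, hb⟩
  have hrl₀ : rr l₀ ≤ r := hrr ▸ single_le_sum_of_canonicallyOrdered (mem_univ l₀)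
  have hel₀ : e l₀ = r - 1 := by rcases he l₀ with _ | _ <;> omega
  have hzero : ∀ i, i ≠ l₀ → rr i = 0 := fun i hi => by
    have := add_le_sum (fun _ _ => Nat.zero_le _) (mem_univ i) (mem_univ l₀) hi (f := rr)
    rcases he l₀ with _ | _ <;> omega
  have hepos : ∀ i, 0 < e i := fun i => by rcases he i with _ | _ <;> omega
  have hqm : ∀ i, i ≠ j → i ≠ l₀ → q i = m i := fun i hij hil₀ =>
    (ha i hij).eq_of_eq_zero (hzero i hil₀) (hepos i)
  rcases hb.of_eq_zero (hzero j hl₀j.symm) (hepos j) with ⟨hqj, hmj⟩ | ⟨hqj, -⟩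
  · -- `q j = e j ≥ r - 1` leaves no room for a third index, where `q = m` would be positive
    have hqj_le : q j ≤ r - 1 := (single_le_sum_of_canonicallyOrdered (mem_univ j)).trans hq
    have hej : e j = r - 1 := by rcases he j with _ | _ <;> omega
    have hcover : ∀ i, i = j ∨ i = l₀ := by
      intro i
      by_contra! hi
      have := add_le_sum (fun _ _ => Nat.zero_le _) (mem_univ i) (mem_univ j) hi.1 (f := q)
      have := hqm i hi.1 hi.2
      have := hm i
      rcases he j with _ | _ <;> omega
    exact hk2 (Fin.eq_two_of_forall_eq_or_eq hl₀j.symm hcover) fun i =>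
      (hcover i).elim (· ▸ hej) (· ▸ hel₀)
  · have hmq : ∑ i ∈ univ.erase l₀, m i ≤ ∑ i ∈ univ.erase l₀, q i := by
      refine sum_le_sum fun i hi => ?_
      obtain rfl | hij := eq_or_ne i j
      · exact hqj.ge
      · exact (hqm i hij (ne_of_mem_erase hi)).ge
    have := htri l₀ hel₀
    have := sum_erase_add univ q (mem_univ l₀)
    have := hrm l₀
    omega

theorem not_bottCriteria_of_forall_le (hk : 2 ≤ k) (hm : ∀ l, 1 ≤ m l) (hr : 2 ≤ r)
    (he : ∀ l, e l = r - 1 ∨ 2 * ((r : ℤ) - 1) ≤ e l)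
    (htri : ∀ l, e l = r - 1 → m l ≤ ∑ i ∈ univ.erase l, m i)
    (hk2 : k = 2 → ¬ ∀ l, e l = r - 1) (hrr : ∑ l, rr l = r) (hq : ∑ l, q l ≤ r - 1)
    (hrm : ∀ l, rr l ≤ m l) {j : Fin k} (hle : ∀ l, l ≠ j → rr l ≤ e l) :
    ¬ ((∀ l, l ≠ j → BottCriterionOmega (m l) (rr l) (q l) (2 * rr l - e l)) ∧
      BottCriterionQuotient (m j) (rr j) (q j) (rr j - e j - 2)) := by
  rintro ⟨ha, hb⟩
  have hrq : ∀ l, l ≠ j → rr l ≤ q l := fun l hl => (ha l hl).le_of_le_of_le (hrm l) (hle l hl)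
  have hrj : rr j ≤ r := hrr ▸ single_le_sum_of_canonicallyOrdered (mem_univ j)
  rcases hb.le_or_eq (hrm j) (by rcases he j with _ | _ <;> omega) with hj | ⟨hqj, hej⟩
  · have : ∑ l, rr l ≤ ∑ l, q l := sum_le_sum fun l _ => by
      obtain rfl | hl := eq_or_ne l j
      exacts [hj, hrq l hl]
    omega
  · have htight : ∀ l ∈ univ.erase j, rr l = q l := by
      refine (sum_eq_sum_iff_of_le fun l hl => hrq l (ne_of_mem_erase hl)).1 ?_
      have := sum_erase_add univ rr (mem_univ j)
      have := sum_erase_add univ q (mem_univ j)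
      have := sum_le_sum (s := univ.erase j) fun l hl => hrq l (ne_of_mem_erase hl)
      omega
    refine false_of_two_mul_eq_add_two hk hm hr he htri hk2 hrr (hrm j) hej fun l hl => ?_
    exact (ha l hl).two_mul_eq_or_eq (htight l (mem_erase.2 ⟨hl, mem_univ l⟩)).symm (hle l hl)

theorem not_bottCriteria (hk : 2 ≤ k) (hm : ∀ l, 1 ≤ m l) (hr : 2 ≤ r)
    (he : ∀ l, e l = r - 1 ∨ 2 * ((r : ℤ) - 1) ≤ e l)
    (htri : ∀ l, e l = r - 1 → m l ≤ ∑ i ∈ univ.erase l, m i)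
    (hk2 : k = 2 → ¬ ∀ l, e l = r - 1) (hrr : ∑ l, rr l = r) (hq : ∑ l, q l ≤ r - 1)
    (hrm : ∀ l, rr l ≤ m l) (j : Fin k) :
    ¬ ((∀ l, l ≠ j → BottCriterionOmega (m l) (rr l) (q l) (2 * rr l - e l)) ∧
      BottCriterionQuotient (m j) (rr j) (q j) (rr j - e j - 2)) := by
  by_cases h : ∃ l, l ≠ j ∧ e l < rr l
  · obtain ⟨l₀, hl₀j, hl₀⟩ := h
    exact not_bottCriteria_of_lt hm hr he htri hk2 hrr hq hrm hl₀j hl₀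
  · push Not at h
    exact not_bottCriteria_of_forall_le hk hm hr he htri hk2 hrr hq hrm h

end

theorem bott_nonvanishing_incompatible (k : ℕ) (hk : 2 ≤ k)
    (d m : Fin k → ℕ) (hd : ∀ l, 1 ≤ d l) (hm : ∀ l, 1 ≤ m l)
    (htri : ∀ l, d l = 1 → m l ≤ ∑ i ∈ Finset.univ.erase l, m i)
    (hk2 : k = 2 → ¬ (∀ l, d l = 1))
    (r : ℕ) (hr : 2 ≤ r) (j : Fin k)
    (rr q : Fin k → ℕ) (hrr : ∑ l, rr l = r) (hq : ∑ l, q l ≤ r - 1)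
    (hrm : ∀ l, rr l ≤ m l) :
    ¬ ((∀ l : Fin k, l ≠ j →
          (q l = 0 ∧ (rr l : ℤ) < 2 * rr l - d l * (r - 1)) ∨
          (q l = rr l ∧ 2 * (rr l : ℤ) - d l * (r - 1) = 0) ∨
          (q l = m l ∧ 2 * (rr l : ℤ) - d l * (r - 1) < (rr l : ℤ) - m l)) ∧
        ((q j = 0 ∧ 0 ≤ (rr j : ℤ) - d j * (r - 1) - 2) ∨
         ((q j : ℤ) = (rr j : ℤ) - 1 ∧ (rr j : ℤ) - d j * (r - 1) - 2 = -(rr j : ℤ) ∧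
            1 ≤ rr j ∧ rr j ≤ m j) ∨
         (q j = rr j ∧ (rr j : ℤ) - d j * (r - 1) - 2 = -(rr j : ℤ) - 1 ∧
            (rr j : ℤ) ≤ (m j : ℤ) - 1) ∨
         ((q j : ℤ) = (m j : ℤ) - 1 ∧ (rr j : ℤ) - d j * (r - 1) - 2 = -(m j : ℤ) - 1 ∧
            (rr j : ℤ) ≤ (m j : ℤ) - 1) ∨
         (q j = m j ∧ (rr j : ℤ) - d j * (r - 1) - 2 ≤ -(m j : ℤ) - 2))) := by
  have hr₁ : (0 : ℤ) < r - 1 := by omega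
  have hd_iff : ∀ l, (d l : ℤ) * (r - 1) = r - 1 ↔ d l = 1 := fun l => by
    rw [mul_eq_right₀ hr₁.ne']
    exact_mod_cast Iff.rfl
  have he : ∀ l, (d l : ℤ) * (r - 1) = r - 1 ∨ 2 * ((r : ℤ) - 1) ≤ d l * (r - 1) := fun l => by
    rcases (hd l).eq_or_lt with h | h
    · exact .inl ((hd_iff l).2 h.symm)
    · exact .inr (mul_le_mul_of_nonneg_right (by exact_mod_cast h) hr₁.le)
  exact not_bottCriteria hk hm hr he (fun l h => htri l ((hd_iff l).1 h))
    (fun h2 hall => hk2 h2 fun l => (hd_iff l).1 (hall l)) hrr hq hrm j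
end

section
/- Let m ≥ 1 and d ≥ 1. Consider the ℂ-linear map Φ from the space of homogeneous polynomials of degree d in ℂ[x_0,…,x_m] sending f to the tuple of its eigen-minors (M_{ij}(f))_{0 ≤ i < j ≤ m}. Then the dimension of the image of Φ equals binom(d+m, m) if d is odd, and binom(d+m, m) − 1 if d is even. (Projectivizing, this gives the dimension binom(d+m,d) − 1, respectively binom(d+m,d) − 2, of the image of the eigenscheme map τ in Theorem A.) -/
/-!
If all eigen-minors of a form `f` of degree `d` vanish, its gradient is parallel to `x`, and Euler's
identity sharpens this to `q * ∂ⱼ f = d * xⱼ * f`. Differentiating once more and summing over `j`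
gives `q * Δ f = d (d + m - 1) f`, where `Δ f` is again a form (of degree `d - 2`) with vanishing
eigen-minors. As `d (d + m - 1) ≠ 0` for `d ≥ 1`, induction on `d` shows that the kernel of `Φ` is
`0` for odd `d` and spanned by `q ^ (d / 2)` for even `d`; rank–nullity concludes.
-/

open MvPolynomial

namespace MvPolynomial

section Identities

variable {σ R : Type*} [CommRing R]

def EigenMinorsVanish (f : MvPolynomial σ R) : Prop :=
  ∀ i j, X j * pderiv i f = X i * pderiv j f

variable [Fintype σ]

variable (σ R) in
noncomputable def sumSq : MvPolynomial σ R := ∑ i, X i ^ 2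

noncomputable def laplacian (f : MvPolynomial σ R) : MvPolynomial σ R :=
  ∑ i, pderiv i (pderiv i f)

theorem isHomogeneous_sumSq : (sumSq σ R).IsHomogeneous 2 :=
  IsHomogeneous.sum _ _ _ fun i _ => isHomogeneous_X_pow i 2

theorem pderiv_sumSq (j : σ) : pderiv j (sumSq σ R) = 2 * X j := by
  classical
  rw [sumSq, map_sum, Finset.sum_eq_single j]
  · rw [pderiv_pow, pderiv_X_self]; ring
  · intro i _ hij
    rw [pderiv_pow, pderiv_X_of_ne hij]; ring
  · simp

theorem eigenMinorsVanish_sumSq_pow (k : ℕ) : EigenMinorsVanish (sumSq σ R ^ k) := by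
  intro i j
  rw [pderiv_pow, pderiv_pow, pderiv_sumSq, pderiv_sumSq]
  ring

theorem IsHomogeneous.laplacian {f : MvPolynomial σ R} {n : ℕ} (hf : f.IsHomogeneous (n + 2)) :
    (laplacian f).IsHomogeneous n :=
  IsHomogeneous.sum _ _ _ fun _ _ => (hf.pderiv.pderiv : IsHomogeneous _ (n + 2 - 1 - 1))

theorem laplacian_eq_zero_of_isHomogeneous_one {f : MvPolynomial σ R} (hf : f.IsHomogeneous 1) :
    laplacian f = 0 := by
  refine Finset.sum_eq_zero fun i _ => ?_
  rw [totalDegree_eq_zero_iff_eq_C.mp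
    ((totalDegree_zero_iff_isHomogeneous σ).mpr (hf.pderiv (i := i))), pderiv_C]

namespace EigenMinorsVanish

variable {f : MvPolynomial σ R} {n : ℕ}

theorem sumSq_mul_pderiv (h : EigenMinorsVanish f) (hf : f.IsHomogeneous n) (j : σ) :
    sumSq σ R * pderiv j f = (n : MvPolynomial σ R) * (X j * f) := by
  calc sumSq σ R * pderiv j f = ∑ i, X i * (X i * pderiv j f) := by
        rw [sumSq, Finset.sum_mul]; exact Finset.sum_congr rfl fun i _ => by ring
    _ = X j * ∑ i, X i * pderiv i f := by
        rw [Finset.mul_sum]; exact Finset.sum_congr rfl fun i _ => by rw [← h i j]; ring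
    _ = (n : MvPolynomial σ R) * (X j * f) := by rw [hf.sum_X_mul_pderiv, nsmul_eq_mul]; ring

theorem sumSq_mul_laplacian (h : EigenMinorsVanish f) (hf : f.IsHomogeneous n) :
    sumSq σ R * laplacian f = C ((n : R) * (n + Fintype.card σ - 2)) * f := by
  have hj : ∀ j, sumSq σ R * pderiv j (pderiv j f) =
      (n : MvPolynomial σ R) * f + ((n : MvPolynomial σ R) - 2) * (X j * pderiv j f) := by
    intro j
    have := congrArg (pderiv j) (h.sumSq_mul_pderiv hf j)
    rw [pderiv_mul, pderiv_sumSq, pderiv_mul, pderiv_mul, pderiv_X_self,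
      Derivation.map_natCast] at this
    linear_combination this
  rw [laplacian, Finset.mul_sum, Finset.sum_congr rfl fun j _ => hj j, Finset.sum_add_distrib,
    ← Finset.mul_sum, ← Finset.mul_sum, hf.sum_X_mul_pderiv, Finset.sum_const, Finset.card_univ,
    nsmul_eq_mul, nsmul_eq_mul]
  simp only [map_mul, map_sub, map_add, map_natCast, map_ofNat]
  ring

end EigenMinorsVanish

end Identities

section Kernel

variable {σ K : Type*} [Fintype σ] [Field K] [CharZero K]

theorem sumSq_ne_zero [Nonempty σ] : sumSq σ K ≠ 0 := by
  intro h
  have := congrArg (eval fun _ => (1 : K)) h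
  simp [sumSq] at this

namespace EigenMinorsVanish

variable {f : MvPolynomial σ K} {n : ℕ}

theorem laplacian [Nonempty σ] (h : EigenMinorsVanish f) (hf : f.IsHomogeneous n) :
    EigenMinorsVanish (laplacian f) := by
  intro i j
  have hi := congrArg (pderiv i) (h.sumSq_mul_laplacian hf)
  have hj := congrArg (pderiv j) (h.sumSq_mul_laplacian hf)
  rw [pderiv_mul, pderiv_sumSq, pderiv_mul, pderiv_C] at hi hj
  apply mul_left_cancel₀ (sumSq_ne_zero (σ := σ) (K := K))
  linear_combination X j * hi - X i * hj + C ((n : K) * (n + Fintype.card σ - 2)) * h i j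

theorem eq_C_mul_sumSq_mul_laplacian (h : EigenMinorsVanish f) (hf : f.IsHomogeneous n)
    (hn : n ≠ 0) (hσ : 2 < n + Fintype.card σ) :
    f = C ((n : K) * (n + Fintype.card σ - 2))⁻¹ * (sumSq σ K * MvPolynomial.laplacian f) := by
  have hE : (n : K) * (n + Fintype.card σ - 2) ≠ 0 := by
    have : (n : K) + Fintype.card σ - 2 = ((n + Fintype.card σ - 2 : ℕ) : K) := by
      push_cast [Nat.cast_sub hσ.le]; ring
    rw [this]
    exact mul_ne_zero (Nat.cast_ne_zero.mpr hn) (Nat.cast_ne_zero.mpr (by omega))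
  rw [h.sumSq_mul_laplacian hf, ← mul_assoc, ← map_mul, inv_mul_cancel₀ hE, map_one, one_mul]

theorem eq_zero_of_isHomogeneous_odd (hσ : 1 < Fintype.card σ) :
    ∀ {k : ℕ} {f : MvPolynomial σ K}, f.IsHomogeneous (2 * k + 1) → EigenMinorsVanish f → f = 0
  | 0, f, hf, h => by
    have : Nonempty σ := Fintype.card_pos_iff.mp (by omega)
    rw [h.eq_C_mul_sumSq_mul_laplacian hf (by omega) (by omega),
      laplacian_eq_zero_of_isHomogeneous_one hf]
    simp only [mul_zero]
  | k + 1, f, hf, h => by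
    have : Nonempty σ := Fintype.card_pos_iff.mp (by omega)
    rw [h.eq_C_mul_sumSq_mul_laplacian hf (by omega) (by omega),
      eq_zero_of_isHomogeneous_odd hσ hf.laplacian (h.laplacian hf), mul_zero, mul_zero]

theorem exists_eq_smul_sumSq_pow [Nonempty σ] :
    ∀ {k : ℕ} {f : MvPolynomial σ K}, f.IsHomogeneous (2 * k) → EigenMinorsVanish f →
      ∃ c : K, f = c • sumSq σ K ^ k
  | 0, f, hf, _ => ⟨coeff 0 f, by
    rw [pow_zero, smul_eq_C_mul, mul_one]
    exact totalDegree_eq_zero_iff_eq_C.mp ((totalDegree_zero_iff_isHomogeneous σ).mpr hf)⟩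
  | k + 1, f, hf, h => by
    obtain ⟨c, hc⟩ := exists_eq_smul_sumSq_pow (k := k) hf.laplacian (h.laplacian hf)
    have := Fintype.card_pos (α := σ)
    rw [h.eq_C_mul_sumSq_mul_laplacian hf (by omega) (by omega), hc]
    refine ⟨(((2 * (k + 1) : ℕ) : K) * ((2 * (k + 1) : ℕ) + Fintype.card σ - 2))⁻¹ * c, ?_⟩
    rw [smul_eq_C_mul, smul_eq_C_mul, pow_succ, map_mul]
    ring

end EigenMinorsVanish

end Kernel

section Dimension

variable {σ K : Type*} [Fintype σ] [Field K]

instance (n : ℕ) : FiniteDimensional K (homogeneousSubmodule σ K n) :=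
  Module.Finite.iff_fg.mpr (homogeneousSubmodule_fg σ K n)

theorem finrank_homogeneousSubmodule (n : ℕ) :
    Module.finrank K (homogeneousSubmodule σ K n) = (Fintype.card σ + n - 1).choose n := by
  classical
  have hset : {d : σ →₀ ℕ | d.degree = n} =
      ((Finset.univ : Finset σ).finsuppAntidiag n : Set (σ →₀ ℕ)) := by
    ext d
    simp [Finsupp.degree_eq_sum, Finset.mem_finsuppAntidiag]
  rw [homogeneousSubmodule_eq_finsupp_supported, hset,
    (AddMonoidAlgebra.supportedEquivFinsupp _).finrank_eq, Module.finrank_finsupp_self]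
  simp [Finset.card_finsuppAntidiag_nat_eq_choose]

end Dimension

section EigenMinorMap

variable (σ K : Type*) [LinearOrder σ] [Field K]

noncomputable def eigenMinorMap (d : ℕ) :
    homogeneousSubmodule σ K d →ₗ[K] ({p : σ × σ // p.1 < p.2} → MvPolynomial σ K) :=
  (LinearMap.pi fun p : {p : σ × σ // p.1 < p.2} =>
    LinearMap.mulLeft K (X p.1.2) ∘ₗ (pderiv p.1.1).toLinearMap
      - LinearMap.mulLeft K (X p.1.1) ∘ₗ (pderiv p.1.2).toLinearMap) ∘ₗ
    (homogeneousSubmodule σ K d).subtype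

variable {σ K} {d : ℕ}

theorem mem_ker_eigenMinorMap {f : homogeneousSubmodule σ K d} :
    f ∈ LinearMap.ker (eigenMinorMap σ K d) ↔ EigenMinorsVanish (f : MvPolynomial σ K) := by
  rw [LinearMap.mem_ker]
  refine ⟨fun h i j => ?_, fun h => _root_.funext fun p => sub_eq_zero.mpr (h p.1.1 p.1.2)⟩
  have hp (p : {p : σ × σ // p.1 < p.2}) :
      X p.1.2 * pderiv p.1.1 (f : MvPolynomial σ K) = X p.1.1 * pderiv p.1.2 f :=
    sub_eq_zero.mp (congrFun h p)
  rcases lt_trichotomy i j with hij | rfl | hij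
  · exact hp ⟨(i, j), hij⟩
  · rfl
  · exact (hp ⟨(j, i), hij⟩).symm

variable [Fintype σ] [CharZero K]

theorem ker_eigenMinorMap_of_odd (hσ : 1 < Fintype.card σ) (hd : Odd d) :
    LinearMap.ker (eigenMinorMap σ K d) = ⊥ := by
  obtain ⟨k, rfl⟩ := hd
  refine (Submodule.eq_bot_iff _).mpr fun f hf => Subtype.ext ?_
  exact EigenMinorsVanish.eq_zero_of_isHomogeneous_odd hσ f.2 (mem_ker_eigenMinorMap.mp hf)

theorem finrank_ker_eigenMinorMap_of_even [Nonempty σ] (hd : Even d) :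
    Module.finrank K (LinearMap.ker (eigenMinorMap σ K d)) = 1 := by
  obtain ⟨k, rfl⟩ := hd
  rw [← two_mul]
  let q : homogeneousSubmodule σ K (2 * k) := ⟨sumSq σ K ^ k, isHomogeneous_sumSq.pow k⟩
  have hker : LinearMap.ker (eigenMinorMap σ K (2 * k)) = K ∙ q := by
    refine le_antisymm (fun f hf => ?_) ?_
    · obtain ⟨c, hc⟩ :=
        EigenMinorsVanish.exists_eq_smul_sumSq_pow f.2 (mem_ker_eigenMinorMap.mp hf)
      exact Submodule.mem_span_singleton.mpr ⟨c, Subtype.ext hc.symm⟩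
    · exact (Submodule.span_singleton_le_iff_mem _ _).mpr
        (mem_ker_eigenMinorMap.mpr (eigenMinorsVanish_sumSq_pow k))
  rw [hker, finrank_span_singleton]
  exact fun h => pow_ne_zero k sumSq_ne_zero (congrArg Subtype.val h)

end EigenMinorMap

end MvPolynomial

theorem rank_eigenminor_map_general (m d : ℕ) (hm : 1 ≤ m) :
    letI Φ : (homogeneousSubmodule (Fin (m + 1)) ℂ d) →ₗ[ℂ]
        ({p : Fin (m + 1) × Fin (m + 1) // p.1 < p.2} → MvPolynomial (Fin (m + 1)) ℂ) :=
      (LinearMap.pi fun p : {p : Fin (m + 1) × Fin (m + 1) // p.1 < p.2} =>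
        LinearMap.mulLeft ℂ (X p.1.2) ∘ₗ (pderiv p.1.1).toLinearMap
          - LinearMap.mulLeft ℂ (X p.1.1) ∘ₗ (pderiv p.1.2).toLinearMap) ∘ₗ
        (homogeneousSubmodule (Fin (m + 1)) ℂ d).subtype
    Module.finrank ℂ (LinearMap.range Φ) =
      if Odd d then (d + m).choose m else (d + m).choose m - 1 := by
  show Module.finrank ℂ (LinearMap.range (eigenMinorMap (Fin (m + 1)) ℂ d)) = _
  have hdim : Module.finrank ℂ (homogeneousSubmodule (Fin (m + 1)) ℂ d) = (d + m).choose m := by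
    rw [finrank_homogeneousSubmodule, Fintype.card_fin, show m + 1 + d - 1 = d + m by omega,
      Nat.choose_symm_add]
  have hrank := (eigenMinorMap (Fin (m + 1)) ℂ d).finrank_range_add_finrank_ker
  split_ifs with hd
  · rw [ker_eigenMinorMap_of_odd (by rw [Fintype.card_fin]; omega) hd, finrank_bot] at hrank
    omega
  · rw [finrank_ker_eigenMinorMap_of_even (Nat.not_odd_iff_even.mp hd)] at hrank
    omega

theorem rank_eigenminor_map (m d : ℕ) (hm : 1 ≤ m) (hd : 1 ≤ d) :
    letI Φ : (homogeneousSubmodule (Fin (m + 1)) ℂ d) →ₗ[ℂ]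
        ({p : Fin (m + 1) × Fin (m + 1) // p.1 < p.2} → MvPolynomial (Fin (m + 1)) ℂ) :=
      (LinearMap.pi fun p : {p : Fin (m + 1) × Fin (m + 1) // p.1 < p.2} =>
        LinearMap.mulLeft ℂ (X p.1.2) ∘ₗ (pderiv p.1.1).toLinearMap
          - LinearMap.mulLeft ℂ (X p.1.1) ∘ₗ (pderiv p.1.2).toLinearMap) ∘ₗ
        (homogeneousSubmodule (Fin (m + 1)) ℂ d).subtype
    Module.finrank ℂ (LinearMap.range Φ) =
      if Odd d then (d + m).choose m else (d + m).choose m - 1 :=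
  rank_eigenminor_map_general m d hm
end
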